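/- EC ≡_W d: the problem EC is continuously Weihrauch equivalent to the operator of differentiation d :⊆ C[0,1] → C[0,1], f ↦ f′, restricted to continuously differentiable functions. -/

import Mathlib

open Filter Topology

abbrev Baire : Type := ℕ → ℕ

/-- The pairing `⟨p,q⟩(2n) = p(n)`, `⟨p,q⟩(2n+1) = q(n)`. -/
def pairB (p q : Baire) : Baire := fun n => if n % 2 = 0 then p (n / 2) else q (n / 2)

/-- A problem: a partial multivalued function on Baire space. -/
structure Problem where
  dom : Set Baire
  sol : Baire → Set Baire

/-- Continuous Weihrauch reducibility. -/
def WRed (f g : Problem) : Prop :=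
  ∃ (Kd Hd : Set Baire) (K H : Baire → Baire),
    ContinuousOn K Kd ∧ ContinuousOn H Hd ∧
      ∀ p ∈ f.dom, p ∈ Kd ∧ K p ∈ g.dom ∧
        ∀ q ∈ g.sol (K p), pairB p q ∈ Hd ∧ H (pairB p q) ∈ f.sol p

/-- Strong continuous Weihrauch reducibility. -/
def SWRed (f g : Problem) : Prop :=
  ∃ (Kd Hd : Set Baire) (K H : Baire → Baire),
    ContinuousOn K Kd ∧ ContinuousOn H Hd ∧
      ∀ p ∈ f.dom, p ∈ Kd ∧ K p ∈ g.dom ∧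
        ∀ q ∈ g.sol (K p), q ∈ Hd ∧ H q ∈ f.sol p

def WEquiv (f g : Problem) : Prop := WRed f g ∧ WRed g f
def SWEquiv (f g : Problem) : Prop := SWRed f g ∧ SWRed g f
def WLt (f g : Problem) : Prop := WRed f g ∧ ¬ WRed g f

/-- `range(p-1)`. -/
def rangeM (p : Baire) : Set ℕ := {n | ∃ i, p i = n + 1}

/-- Characteristic function of a set of naturals. -/
noncomputable def chi (A : Set ℕ) : Baire := A.indicator fun _ => 1

noncomputable def EC : Problem where
  dom := Set.univ
  sol := fun p => {chi (rangeM p)}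

noncomputable def EC1 : Problem where
  dom := {p | ((rangeM p)ᶜ).encard ≤ 1}
  sol := fun p => {chi (rangeM p)}

def pfst (r : Baire) : Baire := fun n => r (2 * n)
def psnd (r : Baire) : Baire := fun n => r (2 * n + 1)

noncomputable def SEP : Problem where
  dom := {r | rangeM (pfst r) ∩ rangeM (psnd r) = ∅}
  sol := fun r =>
    {s | ∃ A : Set ℕ, s = chi A ∧ rangeM (pfst r) ⊆ A ∧ A ⊆ (rangeM (psnd r))ᶜ}

noncomputable def SEP1 : Problem where
  dom := {r | rangeM (pfst r) ∩ rangeM (psnd r) = ∅ ∧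
    ((rangeM (pfst r) ∪ rangeM (psnd r))ᶜ).encard ≤ 1}
  sol := SEP.sol

/- rationals -/
def ratEnum (i : ℕ) : ℚ :=
  ((i.unpair.1 : ℚ) - (i.unpair.2.unpair.1 : ℚ)) / ((i.unpair.2.unpair.2 : ℚ) + 1)

def rhoCauchy (p : Baire) (x : ℝ) : Prop :=
  ∀ n, |(ratEnum (p n) : ℝ) - x| ≤ (2 : ℝ) ^ (-(n : ℤ))

def rhoNaive (p : Baire) (x : ℝ) : Prop :=
  Tendsto (fun n => ((ratEnum (p n) : ℝ))) atTop (nhds x)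

def rhoLt (p : Baire) (x : ℝ) : Prop := rangeM p = {n | (ratEnum n : ℝ) < x}
def rhoGt (p : Baire) (x : ℝ) : Prop := rangeM p = {n | x < (ratEnum n : ℝ)}

def rhoCfLt (p : Baire) (x : ℝ) : Prop :=
  (∀ n, p n ≤ 1) ∧ ∀ n, (p n = 1 ↔ (ratEnum n : ℝ) < x)
def rhoCfGt (p : Baire) (x : ℝ) : Prop :=
  (∀ n, p n ≤ 1) ∧ ∀ n, (p n = 1 ↔ x < (ratEnum n : ℝ))

noncomputable def cfTail : List ℕ → ℝ
  | [] => 0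
  | b :: l => 1 / ((b : ℝ) + cfTail l)

noncomputable def cfApprox (p : Baire) (k : ℕ) : ℝ :=
  ((Denumerable.ofNat ℤ (p 0) : ℤ) : ℝ) + cfTail ((List.range k).map fun i => p (i + 1))

def rhoCf (p : Baire) (x : ℝ) : Prop :=
  ((∀ i, 1 ≤ i → 1 ≤ p i) ∧ Tendsto (cfApprox p) atTop (nhds x)) ∨
    (∃ k, 1 ≤ k ∧ p k = 0 ∧ (∀ i, 1 ≤ i → i < k → 1 ≤ p i) ∧
      (2 ≤ k → 2 ≤ p (k - 1)) ∧ x = cfApprox p (k - 1))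

def rhoDec (p : Baire) (x : ℝ) : Prop :=
  (∀ n, 1 ≤ n → p n ≤ 9) ∧
    x = ((Denumerable.ofNat ℤ (p 0) : ℤ) : ℝ) + ∑' n : ℕ, (p (n + 1) : ℝ) / 10 ^ (n + 1)

/-- The implication problem between two representations of ℝ. -/
def implProblem (d1 d2 : Baire → ℝ → Prop) : Problem where
  dom := {p | ∃ x, d1 p x}
  sol := fun p => {q | ∃ x, d1 p x ∧ d2 q x}

/- trees / WKL / choice on Cantor space -/
def wordCode : List Bool → ℕ
  | [] => 0
  | b :: w => 2 * wordCode w + (if b then 2 else 1)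

def prefixList (x : Baire) (k : ℕ) : List Bool := (List.range k).map fun i => decide (x i = 1)

def isTreeCode (t : Baire) : Prop :=
  (∀ n, t n ≤ 1) ∧
    ∀ w v : List Bool, w <+: v → t (wordCode v) = 1 → t (wordCode w) = 1

def WKL : Problem where
  dom := {t | isTreeCode t ∧ {w : List Bool | t (wordCode w) = 1}.Infinite}
  sol := fun t => {x | (∀ n, x n ≤ 1) ∧ ∀ k, t (wordCode (prefixList x k)) = 1}

def Ap (p : Baire) : Set Baire :=
  {x | (∀ n, x n ≤ 1) ∧ ∀ k, wordCode (prefixList x k) ∉ rangeM p}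

def CCantor : Problem where
  dom := {p | (Ap p).Nonempty}
  sol := Ap

def Cle2 : Problem where
  dom := {p | (Ap p).Nonempty ∧ (Ap p).encard ≤ 2}
  sol := Ap

/- limit and parallelization -/
def projCount (r : Baire) (n : ℕ) : Baire := fun k => r (Nat.pair n k)

def limP : Problem where
  dom := {r | ∃ q : Baire, ∀ k, Tendsto (fun n => projCount r n k) atTop (nhds (q k))}
  sol := fun r => {q | ∀ k, Tendsto (fun n => projCount r n k) atTop (nhds (q k))}

def parallel (f : Problem) : Problem where
  dom := {r | ∀ n, projCount r n ∈ f.dom}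
  sol := fun r => {s | ∀ n, projCount s n ∈ f.sol (projCount r n)}

def MCT : Problem where
  dom := {r | ∃ xs : ℕ → ℝ, (∀ n, rhoCauchy (projCount r n) (xs n)) ∧
    Monotone xs ∧ BddAbove (Set.range xs)}
  sol := fun r => {q | ∃ xs : ℕ → ℝ, (∀ n, rhoCauchy (projCount r n) (xs n)) ∧
    Monotone xs ∧ BddAbove (Set.range xs) ∧ rhoCauchy q (⨆ n, xs n)}

/- SORT and RAT -/
open Classical in
noncomputable def sortOut (p : Baire) : Baire := fun k =>
  if {i | p i = 0}.Infinite then 0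
  else if k < {i | p i = 0}.ncard then 0 else 1

noncomputable def SORT : Problem where
  dom := {p | ∀ n, p n ≤ 1}
  sol := fun p => {sortOut p}

def znk (n : ℕ) : Baire := fun k => if k < n then 0 else 1

def RAT : Problem where
  dom := {p | ∃ x, rhoCauchy p x}
  sol := fun p => {s | ∃ x, rhoCauchy p x ∧
    ((∃ n, x = (ratEnum n : ℝ) ∧ s = znk n) ∨
      ((∀ r : ℚ, x ≠ (r : ℝ)) ∧ s = fun _ => 0))}

/- omniscience principles -/
def projFin (m i : ℕ) (r : Baire) : Baire := fun k => r (m * k + i - 1)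
def isZeroSeq (p : Baire) : Prop := ∀ k, p k = 0
def constSeq (i : ℕ) : Baire := fun _ => i

noncomputable def LPOn (n : ℕ) : Problem where
  dom := Set.univ
  sol := fun r => {constSeq ({i | 1 ≤ i ∧ i ≤ n ∧ isZeroSeq (projFin n i r)}.ncard)}

def LLPOn (n : ℕ) : Problem where
  dom := {r | {i | 1 ≤ i ∧ i ≤ n ∧ ¬ isZeroSeq (projFin n i r)}.encard ≤ 1}
  sol := fun r => {s | ∃ i, 1 ≤ i ∧ i ≤ n ∧ isZeroSeq (projFin n i r) ∧ s = constSeq i}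

def MLPOn (n : ℕ) : Problem where
  dom := {r | ∃ i, 1 ≤ i ∧ i ≤ n ∧ isZeroSeq (projFin n i r)}
  sol := fun r => {s | ∃ i, 1 ≤ i ∧ i ≤ n ∧ isZeroSeq (projFin n i r) ∧ s = constSeq i}

def LPO : Problem where
  dom := Set.univ
  sol := fun p => {s | (isZeroSeq p ∧ s = constSeq 1) ∨ (¬ isZeroSeq p ∧ s = constSeq 0)}

/- choice problems on ℕ etc. -/
def Cfin (n : ℕ) : Problem where
  dom := {p | ∃ i, i < n ∧ i ∉ rangeM p}
  sol := fun p => {s | ∃ i, i < n ∧ i ∉ rangeM p ∧ s = constSeq i}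

def ACCfin (n : ℕ) : Problem where
  dom := {p | (∃ i, i < n ∧ i ∉ rangeM p) ∧ ({i | i < n} ∩ rangeM p).encard ≤ 1}
  sol := (Cfin n).sol

def CNat : Problem where
  dom := {p | ∃ i, i ∉ rangeM p}
  sol := fun p => {s | ∃ i, i ∉ rangeM p ∧ s = constSeq i}

/- differentiation -/
instance : Countable (AddMonoidAlgebra ℚ ℕ) :=
  Function.Injective.countable (f := AddMonoidAlgebra.coeff) (fun a b h => by cases a; cases b; cases h; rfl)

instance : Countable (Polynomial ℚ) :=
  Polynomial.toFinsupp_injective.countable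

noncomputable def polyEnum : ℕ → Polynomial ℚ :=
  (exists_surjective_nat (Polynomial ℚ)).choose

noncomputable def polyFun (k : ℕ) : C(Set.Icc (0:ℝ) 1, ℝ) :=
  ⟨fun x => ((polyEnum k).map (algebraMap ℚ ℝ)).eval (x : ℝ),
   (((polyEnum k).map (algebraMap ℚ ℝ)).continuous).comp continuous_subtype_val⟩

noncomputable def deltaC (p : Baire) (f : C(Set.Icc (0:ℝ) 1, ℝ)) : Prop :=
  ∀ n, ‖f - polyFun (p n)‖ ≤ (2 : ℝ) ^ (-(n : ℤ))

def IsDerivOn (f g : C(Set.Icc (0:ℝ) 1, ℝ)) : Prop :=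
  ∀ x : Set.Icc (0:ℝ) 1,
    HasDerivWithinAt (Set.IccExtend (by norm_num : (0:ℝ) ≤ 1) f) (g x) (Set.Icc 0 1) (x : ℝ)

noncomputable def diffP : Problem where
  dom := {p | ∃ f g, deltaC p f ∧ IsDerivOn f g}
  sol := fun p => {q | ∃ f g, deltaC p f ∧ IsDerivOn f g ∧ deltaC q g}

/-!
`EC ≤ d`: from an enumeration `p`, stage `i` adds, when `p i = n + 1` occurs there for the
first time, a tent of height `2⁻ⁿ` centred at `cₙ = (3/4)·2⁻ⁿ`, of width at most `2⁻ⁱ` and too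
narrow to reach any other `cₘ`. The heights are summable, so the sum `g` of the tents is
continuous. Its primitive `f` is computable from `p`: the primitive of the stage-`i` tent is
bounded by `2·2⁻ⁱ`, so the first `s` stages determine `f` up to `4·2⁻ˢ`. As `g(cₙ)` is `2⁻ⁿ` or
`0` according as `n` is enumerated or not, membership is read off from any name of `f' = g`.

`d ≤ EC`: by the mean value theorem, `‖f' - P_j‖ > 2⁻⁽ⁿ⁺¹⁾` iff the slope of `f - ∫ P_j` over
some rational interval exceeds `2⁻⁽ⁿ⁺¹⁾`, which finitely much of a name of `f` certifies. So the
set of such pairs `(n, j)` is enumerable from the name, `EC` decides it, and the least `j`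
outside it for each `n` gives a name of `f'`.
-/

open Set

local notation "𝕀" => Set.Icc (0:ℝ) 1

section BaireSpace

variable {α β : Type*} [TopologicalSpace α] [DiscreteTopology α] [TopologicalSpace β]

lemma continuousAt_of_forall_mem_cylinder {F : (ℕ → α) → β} {x : ℕ → α} (n : ℕ)
    (h : ∀ y ∈ PiNat.cylinder x n, F y = F x) : ContinuousAt F x :=
  continuousAt_const.congr <| Filter.mem_of_superset
    ((PiNat.isOpen_cylinder _ x n).mem_nhds (PiNat.self_mem_cylinder x n)) fun y hy => (h y hy).symm

lemma DependsOn.continuous {F : (ℕ → α) → β} {s : Set ℕ} (hF : DependsOn F s) (hs : s.Finite) :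
    Continuous F := by
  obtain ⟨N, hN⟩ := hs.bddAbove
  exact continuous_iff_continuousAt.2 fun x => continuousAt_of_forall_mem_cylinder (N + 1)
    fun y hy => hF fun i hi => hy i (Nat.lt_succ_of_le (hN hi))

lemma continuousOn_sInf_setOf_eq_zero :
    ContinuousOn (fun r : ℕ → ℕ => sInf {k | r k = 0}) {r | ∃ k, r k = 0} := by
  intro r hr
  refine (continuousAt_of_forall_mem_cylinder (sInf {k | r k = 0} + 1)
    fun y hy => ?_).continuousWithinAt
  have hagree : ∀ i ≤ sInf {k | r k = 0}, y i = r i := fun i hi => hy i (Nat.lt_succ_of_le hi)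
  have hy0 : y (sInf {k | r k = 0}) = 0 := (hagree _ le_rfl).trans (Nat.sInf_mem hr)
  refine le_antisymm (Nat.sInf_le hy0) (le_csInf ⟨_, hy0⟩ fun i hi => ?_)
  by_contra! hlt
  exact Nat.notMem_of_lt_sInf hlt ((hagree i hlt.le).symm.trans hi)

end BaireSpace

lemma psnd_pairB (p q : Baire) : psnd (pairB p q) = q := by
  funext k
  simp [psnd, pairB, Nat.add_mod, show (2 * k + 1) / 2 = k by omega]

lemma two_zpow_neg_natCast (n : ℕ) : (2:ℝ) ^ (-(n:ℤ)) = (1/2) ^ n := by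
  rw [zpow_neg, zpow_natCast, one_div, inv_pow]

lemma deltaC_iff {p : Baire} {f : C(𝕀, ℝ)} :
    deltaC p f ↔ ∀ n, ‖f - polyFun (p n)‖ ≤ (1/2) ^ n := by
  simp only [deltaC, two_zpow_neg_natCast]

lemma polyFun_apply (k : ℕ) (x : 𝕀) :
    polyFun k x = ((polyEnum k).map (algebraMap ℚ ℝ)).eval (x : ℝ) := rfl

lemma denseRange_polyFun : DenseRange polyFun := by
  refine dense_iff_closure_eq.2 <| eq_univ_of_univ_subset fun f _ => ?_
  have hpoly : (polynomialFunctions 𝕀 : Set C(𝕀, ℝ)) ⊆ closure (range polyFun) := by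
    rintro _ ⟨P, -, rfl⟩
    let mono : Fin (P.natDegree + 1) → C(𝕀, ℝ) := fun k =>
      (Polynomial.X ^ (k : ℕ)).toContinuousMapOn 𝕀
    let Φ : (Fin (P.natDegree + 1) → ℝ) → C(𝕀, ℝ) := fun c => ∑ k, c k • mono k
    have hΦ : Continuous Φ :=
      continuous_finsetSum _ fun k _ => (continuous_apply k).smul continuous_const
    have hP : Φ (fun k => P.coeff k) = P.toContinuousMapOn 𝕀 := by
      ext x
      simp [Φ, mono, P.eval_eq_sum_range,
        Fin.sum_univ_eq_sum_range (fun k => P.coeff k * (x:ℝ) ^ k)]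
    have hrat : ∀ c : Fin (P.natDegree + 1) → ℚ, Φ (fun k => (c k : ℝ)) ∈ range polyFun := by
      intro c
      obtain ⟨j, hj⟩ := (exists_surjective_nat (Polynomial ℚ)).choose_spec
        (∑ k, Polynomial.C (c k) * Polynomial.X ^ (k : ℕ))
      refine ⟨j, ContinuousMap.ext fun x => ?_⟩
      simp [Φ, mono, polyFun_apply, polyEnum, hj]
    change P.toContinuousMapOn 𝕀 ∈ _
    rw [← hP]
    refine map_mem_closure (s := range fun (c : Fin (P.natDegree + 1) → ℚ) k => (c k : ℝ)) hΦ ?_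
      (by rintro _ ⟨c, rfl⟩; exact hrat c)
    exact (DenseRange.piMap fun _ => Rat.denseRange_cast (𝕜 := ℝ)).closure_range ▸ mem_univ _
  rw [← closure_closure (s := range polyFun)]
  refine closure_mono hpoly ?_
  rw [← Subalgebra.topologicalClosure_coe, polynomialFunctions_closure_eq_top]
  trivial

lemma exists_polyFun_norm_sub_le (f : C(𝕀, ℝ)) (n : ℕ) : ∃ k, ‖f - polyFun k‖ ≤ (1/2) ^ n := by
  obtain ⟨k, hk⟩ := denseRange_polyFun.exists_dist_lt f (by positivity : (0:ℝ) < (1/2) ^ n)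
  exact ⟨k, dist_eq_norm f _ ▸ hk.le⟩

noncomputable def polyIndexNear (f : C(𝕀, ℝ)) (n : ℕ) : ℕ :=
  (exists_polyFun_norm_sub_le f n).choose

lemma norm_sub_polyIndexNear_le (f : C(𝕀, ℝ)) (n : ℕ) :
    ‖f - polyFun (polyIndexNear f n)‖ ≤ (1/2) ^ n :=
  (exists_polyFun_norm_sub_le f n).choose_spec

lemma deltaC_polyIndexNear {f : C(𝕀, ℝ)} {h : ℕ → C(𝕀, ℝ)}
    (hh : ∀ n, ‖f - h n‖ ≤ (1/2) ^ (n + 1)) :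
    deltaC (fun n => polyIndexNear (h n) (n + 1)) f := by
  refine deltaC_iff.2 fun n => ?_
  calc ‖f - polyFun (polyIndexNear (h n) (n + 1))‖
      ≤ ‖f - h n‖ + ‖h n - polyFun (polyIndexNear (h n) (n + 1))‖ :=
        norm_sub_le_norm_sub_add_norm_sub _ _ _
    _ ≤ (1/2) ^ (n + 1) + (1/2) ^ (n + 1) := add_le_add (hh n) (norm_sub_polyIndexNear_le _ _)
    _ = (1/2) ^ n := by ring

namespace deltaC

variable {p : Baire} {f : C(𝕀, ℝ)}

lemma tendsto (h : deltaC p f) : Tendsto (fun n => polyFun (p n)) atTop (𝓝 f) := by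
  refine tendsto_iff_norm_sub_tendsto_zero.2 <| squeeze_zero (fun _ => norm_nonneg _) (fun n => ?_)
    (tendsto_pow_atTop_nhds_zero_of_lt_one (by norm_num : (0:ℝ) ≤ 1/2) (by norm_num))
  rw [norm_sub_rev]
  exact deltaC_iff.1 h n

lemma unique {f' : C(𝕀, ℝ)} (h : deltaC p f) (h' : deltaC p f') : f = f' :=
  tendsto_nhds_unique h.tendsto h'.tendsto

lemma abs_sub_le (h : deltaC p f) (n : ℕ) (x : 𝕀) : |f x - polyFun (p n) x| ≤ (1/2) ^ n :=
  ((f - polyFun (p n)).norm_coe_le_norm x).trans (deltaC_iff.1 h n)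

end deltaC

lemma IsDerivOn.unique {f g g' : C(𝕀, ℝ)} (h : IsDerivOn f g) (h' : IsDerivOn f g') : g = g' :=
  ContinuousMap.ext fun x => (uniqueDiffOn_Icc_zero_one x x.2).eq_deriv _ (h x) (h' x)

section Tent

lemma abs_intervalIntegral_le_of_support_subset {T : ℝ → ℝ} (hT : Continuous T) {a b : ℝ}
    (hab : a ≤ b) (hT1 : ∀ x, |T x| ≤ 1) (hsupp : Function.support T ⊆ Icc a b) (u v : ℝ) :
    |∫ x in u..v, T x| ≤ b - a := by
  have hzero : ∀ x ∉ Icc a b, |T x| = 0 := fun x hx => by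
    rw [Function.notMem_support.1 fun h => hx (hsupp h), abs_zero]
  have hint : MeasureTheory.Integrable (fun x => |T x|) :=
    hT.abs.integrable_of_hasCompactSupport (HasCompactSupport.intro isCompact_Icc hzero)
  calc |∫ x in u..v, T x|
      ≤ ∫ x in uIoc u v, |T x| := by
        simpa only [Real.norm_eq_abs] using
          intervalIntegral.norm_integral_le_integral_norm_uIoc (f := T) (μ := MeasureTheory.volume)
    _ ≤ ∫ x, |T x| := MeasureTheory.setIntegral_le_integral hint (.of_forall fun _ => abs_nonneg _)
    _ = ∫ x in Icc a b, |T x| :=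
      (MeasureTheory.setIntegral_eq_integral_of_forall_compl_eq_zero hzero).symm
    _ ≤ ∫ _ in Icc a b, (1:ℝ) :=
      MeasureTheory.setIntegral_mono_on hint.integrableOn (by simp) measurableSet_Icc
        fun x _ => hT1 x
    _ = b - a := by simp [hab]

noncomputable def tent (c w x : ℝ) : ℝ := max 0 (1 - |x - c| / w)

variable {c w : ℝ}

lemma continuous_tent (c w : ℝ) : Continuous (tent c w) := by
  unfold tent; fun_prop

lemma tent_nonneg (x : ℝ) : 0 ≤ tent c w x := le_max_left _ _

lemma tent_le_one (hw : 0 < w) (x : ℝ) : tent c w x ≤ 1 :=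
  max_le zero_le_one (sub_le_self _ (by positivity))

lemma tent_self : tent c w c = 1 := by simp [tent]

lemma tent_eq_zero (hw : 0 < w) {x : ℝ} (hx : w ≤ |x - c|) : tent c w x = 0 :=
  max_eq_left <| by rw [sub_nonpos, one_le_div hw]; exact hx

lemma support_tent_subset (hw : 0 < w) : Function.support (tent c w) ⊆ Icc (c - w) (c + w) := by
  intro x hx
  by_contra hxI
  refine hx (tent_eq_zero hw ?_)
  rw [mem_Icc, not_and_or, not_le, not_le] at hxI
  rcases hxI with h | h
  · rw [abs_of_neg (by linarith)]; linarith
  · rw [abs_of_pos (by linarith)]; linarith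

end Tent

lemma half_pow_div_two_le_abs_sub {m n : ℕ} (h : m ≠ n) :
    (1/2:ℝ) ^ n / 2 ≤ |(1/2:ℝ) ^ m - (1/2) ^ n| := by
  have hpos : (0:ℝ) < (1/2) ^ n := by positivity
  rcases h.lt_or_gt with hlt | hgt
  · have : (1/2:ℝ) ^ n ≤ (1/2) ^ (m + 1) := pow_le_pow_of_le_one (by norm_num) (by norm_num) hlt
    rw [pow_succ] at this
    rw [abs_of_pos (by linarith)]; linarith
  · have : (1/2:ℝ) ^ m ≤ (1/2) ^ (n + 1) := pow_le_pow_of_le_one (by norm_num) (by norm_num) hgt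
    rw [pow_succ] at this
    rw [abs_of_neg (by linarith)]; linarith

noncomputable def spikeCentre (n : ℕ) : ℝ := 3/4 * (1/2) ^ n

noncomputable def spikeWidth (n i : ℕ) : ℝ := min ((1/2) ^ n / 8) ((1/2) ^ i)

noncomputable def spike (n i : ℕ) (x : ℝ) : ℝ := (1/2) ^ n * tent (spikeCentre n) (spikeWidth n i) x

lemma spikeCentre_mem (n : ℕ) : spikeCentre n ∈ 𝕀 := by
  have : (1/2:ℝ) ^ n ≤ 1 := pow_le_one₀ (by norm_num) (by norm_num)
  constructor <;> unfold spikeCentre <;> [positivity; linarith]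

lemma spikeWidth_pos (n i : ℕ) : 0 < spikeWidth n i := lt_min (by positivity) (by positivity)

lemma continuous_spike (n i : ℕ) : Continuous (spike n i) :=
  continuous_const.mul (continuous_tent _ _)

lemma abs_spike_le (n i : ℕ) (x : ℝ) : |spike n i x| ≤ (1/2) ^ n := by
  rw [spike, abs_of_nonneg (mul_nonneg (by positivity) (tent_nonneg x))]
  exact mul_le_of_le_one_right (by positivity) (tent_le_one (spikeWidth_pos n i) x)

lemma spike_spikeCentre (n i : ℕ) : spike n i (spikeCentre n) = (1/2) ^ n := by
  rw [spike, tent_self, mul_one]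

lemma spike_spikeCentre_of_ne {m n : ℕ} (h : m ≠ n) (i : ℕ) : spike n i (spikeCentre m) = 0 := by
  rw [spike, tent_eq_zero (spikeWidth_pos n i), mul_zero]
  have := half_pow_div_two_le_abs_sub h
  have : (0:ℝ) < (1/2) ^ n := by positivity
  calc spikeWidth n i ≤ (1/2) ^ n / 8 := min_le_left _ _
    _ ≤ 3/4 * |(1/2:ℝ) ^ m - (1/2) ^ n| := by linarith
    _ = |spikeCentre m - spikeCentre n| := by
      rw [spikeCentre, spikeCentre, ← mul_sub, abs_mul, abs_of_pos (by norm_num : (0:ℝ) < 3/4)]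

lemma abs_integral_spike_le (n i : ℕ) (x : ℝ) : |∫ t in (0:ℝ)..x, spike n i t| ≤ 2 * (1/2) ^ i := by
  have hw := spikeWidth_pos n i
  have hsupp : Function.support (spike n i) ⊆
      Icc (spikeCentre n - spikeWidth n i) (spikeCentre n + spikeWidth n i) :=
    (Function.support_mul_subset_right (fun _ => (1/2:ℝ) ^ n) _).trans (support_tent_subset hw)
  have hle := abs_intervalIntegral_le_of_support_subset (continuous_spike n i) (by linarith)
    (fun y => (abs_spike_le n i y).trans (pow_le_one₀ (by norm_num) (by norm_num))) hsupp 0 x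
  linarith [show spikeWidth n i ≤ (1/2) ^ i from min_le_right _ _]

section ECFunction

def IsFirstOccurrence (p : Baire) (i : ℕ) : Prop := p i ≠ 0 ∧ ∀ j < i, p j ≠ p i

lemma IsFirstOccurrence.eq_of_apply_eq {p : Baire} {i j : ℕ} (hi : IsFirstOccurrence p i)
    (hj : IsFirstOccurrence p j) (h : p i = p j) : i = j := by
  rcases lt_trichotomy i j with hlt | heq | hgt
  exacts [absurd h (hj.2 i hlt), heq, absurd h.symm (hi.2 j hgt)]

variable (p : Baire)

open Classical in
noncomputable def ecTerm (i : ℕ) (x : ℝ) : ℝ :=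
  if IsFirstOccurrence p i then spike (p i - 1) i x else 0

noncomputable def ecPrimitive (i : ℕ) (x : ℝ) : ℝ := ∫ t in (0:ℝ)..x, ecTerm p i t

noncomputable def ecHeight : ℕ → ℝ :=
  {i | IsFirstOccurrence p i}.indicator fun i => (1/2) ^ (p i - 1)

noncomputable def ecDeriv (x : ℝ) : ℝ := ∑' i, ecTerm p i x

noncomputable def ecFun (x : ℝ) : ℝ := ∑' i, ecPrimitive p i x

noncomputable def ecPartial (s : ℕ) (x : ℝ) : ℝ := ∑ i ∈ Finset.range s, ecPrimitive p i x

lemma continuous_ecTerm (i : ℕ) : Continuous (ecTerm p i) := by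
  unfold ecTerm; split_ifs
  exacts [continuous_spike _ _, continuous_const]

lemma hasDerivAt_ecPrimitive (i : ℕ) (x : ℝ) : HasDerivAt (ecPrimitive p i) (ecTerm p i x) x :=
  ((continuous_ecTerm p i).integral_hasStrictDerivAt 0 x).hasDerivAt

lemma continuous_ecPrimitive (i : ℕ) : Continuous (ecPrimitive p i) :=
  continuous_iff_continuousAt.2 fun x => (hasDerivAt_ecPrimitive p i x).continuousAt

lemma norm_ecTerm_le (i : ℕ) (x : ℝ) : ‖ecTerm p i x‖ ≤ ecHeight p i := by
  by_cases h : IsFirstOccurrence p i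
  · simpa [ecTerm, ecHeight, h] using abs_spike_le (p i - 1) i x
  · simp [ecTerm, ecHeight, h]

lemma norm_ecPrimitive_le (i : ℕ) (x : ℝ) : ‖ecPrimitive p i x‖ ≤ 2 * (1/2) ^ i := by
  by_cases h : IsFirstOccurrence p i
  · simpa [ecPrimitive, ecTerm, h] using abs_integral_spike_le (p i - 1) i x
  · simp [ecPrimitive, ecTerm, h]

/-- Each value `n` is enumerated at most once, so the heights `2⁻ⁿ` are summable. -/
lemma summable_ecHeight : Summable (ecHeight p) := by
  refine summable_subtype_iff_indicator.1 ((summable_geometric_two).comp_injective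
    (i := fun i : {i | IsFirstOccurrence p i} => p i - 1) ?_)
  rintro ⟨i, hi⟩ ⟨j, hj⟩ hij
  have : p i ≠ 0 := hi.1
  have : p j ≠ 0 := hj.1
  exact Subtype.ext (hi.eq_of_apply_eq hj (by dsimp only at hij; omega) : i = j)

lemma hasDerivAt_ecFun (x : ℝ) : HasDerivAt (ecFun p) (ecDeriv p x) x :=
  hasDerivAt_tsum (summable_ecHeight p) (hasDerivAt_ecPrimitive p) (norm_ecTerm_le p)
    (y₀ := 0) (by simp [ecPrimitive]) x

lemma continuous_ecDeriv : Continuous (ecDeriv p) :=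
  continuous_tsum (continuous_ecTerm p) (summable_ecHeight p) (norm_ecTerm_le p)

lemma continuous_ecFun : Continuous (ecFun p) :=
  continuous_iff_continuousAt.2 fun x => (hasDerivAt_ecFun p x).continuousAt

lemma continuous_ecPartial (s : ℕ) : Continuous (ecPartial p s) :=
  continuous_finsetSum _ fun i _ => continuous_ecPrimitive p i

lemma abs_ecFun_sub_ecPartial_le (s : ℕ) (x : ℝ) :
    |ecFun p x - ecPartial p s x| ≤ 4 * (1/2) ^ s := by
  have hbound : HasSum (fun i => 2 * (1/2:ℝ) ^ (i + s)) (4 * (1/2) ^ s) := by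
    have e : (fun i => 2 * (1/2:ℝ) ^ (i + s)) = fun i => 2 * (1/2) ^ s * (1/2) ^ i := by
      funext i; ring
    rw [e, show (4:ℝ) * (1/2) ^ s = 2 * (1/2) ^ s * 2 by ring]
    exact hasSum_geometric_two.mul_left _
  have htail := (Summable.of_norm_bounded (summable_geometric_two.mul_left 2) fun i =>
    norm_ecPrimitive_le p i x).sum_add_tsum_nat_add s
  rw [ecFun, ecPartial, ← htail, add_sub_cancel_left]
  exact tsum_of_norm_bounded hbound fun i => norm_ecPrimitive_le p (i + s) x

lemma ecTerm_spikeCentre_eq_zero {i n : ℕ} (h : ¬ (IsFirstOccurrence p i ∧ p i = n + 1)) :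
    ecTerm p i (spikeCentre n) = 0 := by
  unfold ecTerm
  split_ifs with hi
  · exact spike_spikeCentre_of_ne (fun hn => h ⟨hi, by have := hi.1; omega⟩) i
  · rfl

lemma ecDeriv_spikeCentre (n : ℕ) :
    ecDeriv p (spikeCentre n) = (rangeM p).indicator (fun n => (1/2) ^ n) n := by
  classical
  by_cases hn : n ∈ rangeM p
  · have hi₀ : IsFirstOccurrence p (Nat.find hn) :=
      ⟨by rw [Nat.find_spec hn]; omega,
        fun j hj hpj => Nat.find_min hn hj (hpj.trans (Nat.find_spec hn))⟩
    rw [indicator_of_mem hn, ecDeriv, tsum_eq_single (Nat.find hn)]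
    · simp [ecTerm, hi₀, Nat.find_spec hn, spike_spikeCentre]
    · refine fun i hi => ecTerm_spikeCentre_eq_zero p fun ⟨hfo, hpi⟩ => hi ?_
      exact hfo.eq_of_apply_eq hi₀ (hpi.trans (Nat.find_spec hn).symm)
  · have hzero : ∀ i, ecTerm p i (spikeCentre n) = 0 := fun i =>
      ecTerm_spikeCentre_eq_zero p fun h => hn ⟨i, h.2⟩
    simp [indicator_of_notMem hn, ecDeriv, hzero]

lemma ecTerm_congr {p q : Baire} {i : ℕ} (h : ∀ j ≤ i, p j = q j) : ecTerm p i = ecTerm q i := by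
  have hfo : IsFirstOccurrence p i ↔ IsFirstOccurrence q i := by
    unfold IsFirstOccurrence
    rw [h i le_rfl]
    exact and_congr_right fun _ => forall₂_congr fun j hj => by rw [h j hj.le]
  classical
  funext x
  simp only [ecTerm, hfo, h i le_rfl]

lemma ecPartial_congr {p q : Baire} {s : ℕ} (h : ∀ i < s, p i = q i) :
    ecPartial p s = ecPartial q s :=
  funext fun x => Finset.sum_congr rfl fun i hi => by
    simp only [ecPrimitive, ecTerm_congr fun j hj => h j (hj.trans_lt (Finset.mem_range.1 hi))]

end ECFunction

lemma isDerivOn_restrict {F G : C(ℝ, ℝ)} (h : ∀ x, HasDerivAt F (G x) x) :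
    IsDerivOn (F.restrict 𝕀) (G.restrict 𝕀) := fun x =>
  (h x).hasDerivWithinAt.congr (fun _ hy => IccExtend_of_mem _ _ hy) (IccExtend_of_mem _ _ x.2)

noncomputable def ecFunC (p : Baire) : C(𝕀, ℝ) :=
  (⟨ecFun p, continuous_ecFun p⟩ : C(ℝ, ℝ)).restrict 𝕀

noncomputable def ecDerivC (p : Baire) : C(𝕀, ℝ) :=
  (⟨ecDeriv p, continuous_ecDeriv p⟩ : C(ℝ, ℝ)).restrict 𝕀

noncomputable def ecPartialC (p : Baire) (s : ℕ) : C(𝕀, ℝ) :=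
  (⟨ecPartial p s, continuous_ecPartial p s⟩ : C(ℝ, ℝ)).restrict 𝕀

lemma isDerivOn_ecFunC (p : Baire) : IsDerivOn (ecFunC p) (ecDerivC p) :=
  isDerivOn_restrict (hasDerivAt_ecFun p)

lemma norm_ecFunC_sub_ecPartialC_le (p : Baire) (s : ℕ) :
    ‖ecFunC p - ecPartialC p s‖ ≤ 4 * (1/2) ^ s :=
  (ContinuousMap.norm_le _ (by positivity)).2 fun x => abs_ecFun_sub_ecPartial_le p s x

noncomputable def ecName (p : Baire) (n : ℕ) : ℕ := polyIndexNear (ecPartialC p (n + 3)) (n + 1)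

lemma deltaC_ecName (p : Baire) : deltaC (ecName p) (ecFunC p) :=
  deltaC_polyIndexNear fun n => (norm_ecFunC_sub_ecPartialC_le p (n + 3)).trans_eq (by ring)

lemma continuous_ecName : Continuous ecName :=
  continuous_pi fun n => DependsOn.continuous (s := Iio (n + 3))
    (fun p q h => by simp only [ecName, ecPartialC, ecPartial_congr h]) (finite_Iio _)

noncomputable def ecDecode (r : Baire) (n : ℕ) : ℕ :=
  if (1/2) ^ n / 2 < polyFun (psnd r (n + 2)) ⟨spikeCentre n, spikeCentre_mem n⟩ then 1 else 0

lemma continuous_ecDecode : Continuous ecDecode :=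
  continuous_pi fun n => DependsOn.continuous (s := {2 * (n + 2) + 1})
    (fun r r' h => by rw [ecDecode, ecDecode, psnd, psnd, h _ rfl]) (finite_singleton _)

lemma ecDecode_pairB {p q : Baire} (hq : deltaC q (ecDerivC p)) :
    ecDecode (pairB p q) = chi (rangeM p) := by
  funext n
  have happrox := hq.abs_sub_le (n + 2) ⟨spikeCentre n, spikeCentre_mem n⟩
  have hval : ecDerivC p ⟨spikeCentre n, spikeCentre_mem n⟩ =
      (rangeM p).indicator (fun n => (1/2) ^ n) n := ecDeriv_spikeCentre p n
  have : (0:ℝ) < (1/2) ^ n := by positivity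
  rw [hval, pow_add] at happrox
  rw [ecDecode, psnd_pairB]
  by_cases hn : n ∈ rangeM p
  · rw [indicator_of_mem hn, abs_le] at happrox
    rw [if_pos (by linarith), chi, indicator_of_mem hn]
  · rw [indicator_of_notMem hn, abs_le] at happrox
    rw [if_neg (by linarith), chi, indicator_of_notMem hn]

theorem EC_wred_diffP : WRed EC diffP := by
  refine ⟨univ, univ, ecName, ecDecode, continuous_ecName.continuousOn,
    continuous_ecDecode.continuousOn,
    fun p _ => ⟨trivial, ⟨_, _, deltaC_ecName p, isDerivOn_ecFunC p⟩, ?_⟩⟩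
  rintro q ⟨f, g, hf, hfg, hq⟩
  obtain rfl := hf.unique (deltaC_ecName p)
  obtain rfl := hfg.unique (isDerivOn_ecFunC p)
  exact ⟨trivial, ecDecode_pairB hq⟩

lemma exists_rat_Icc_subset_of_isOpen {U : Set ℝ} (hU : IsOpen U) (hne : U.Nonempty) :
    ∃ a b : ℚ, (a:ℝ) < b ∧ Icc (a:ℝ) b ⊆ U := by
  obtain ⟨y, hy⟩ := hne
  obtain ⟨ε, hε, hball⟩ := Metric.isOpen_iff.1 hU y hy
  obtain ⟨a, hya, hay⟩ := exists_rat_btwn (show y - ε < y by linarith)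
  obtain ⟨b, hyb, hby⟩ := exists_rat_btwn (show y < y + ε by linarith)
  refine ⟨a, b, hay.trans hyb, fun x hx => hball ?_⟩
  rw [Real.ball_eq_Ioo]
  exact ⟨hya.trans_le hx.1, hx.2.trans_lt hby⟩

lemma exists_abs_sub_eq_mul_of_hasDerivWithinAt {F : ℝ → ℝ} {G : C(𝕀, ℝ)}
    (hF : ∀ x : 𝕀, HasDerivWithinAt F (G x) 𝕀 x) {a b : ℝ} (ha : 0 ≤ a) (hb : b ≤ 1)
    (hab : a < b) : ∃ ξ : 𝕀, (ξ:ℝ) ∈ Ioo a b ∧ |F b - F a| = |G ξ| * (b - a) := by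
  have hsub : Icc a b ⊆ 𝕀 := Icc_subset_Icc ha hb
  obtain ⟨ξ, hξ, hslope⟩ := exists_hasDerivAt_eq_slope F (IccExtend zero_le_one G) hab
    (fun x hx => (hF ⟨x, hsub hx⟩).continuousWithinAt.mono hsub)
    (fun x hx => by
      rw [IccExtend_of_mem _ _ (hsub (Ioo_subset_Icc_self hx))]
      exact (hF ⟨x, _⟩).hasDerivAt (Icc_mem_nhds (ha.trans_lt hx.1) (hx.2.trans_le hb)))
  refine ⟨⟨ξ, hsub (Ioo_subset_Icc_self hξ)⟩, hξ, ?_⟩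
  rw [← IccExtend_of_mem zero_le_one G, hslope, abs_div, abs_of_pos (sub_pos.2 hab),
    div_mul_cancel₀ _ (sub_pos.2 hab).ne']

lemma lt_norm_iff_exists_rat_slope {F : ℝ → ℝ} {G : C(𝕀, ℝ)}
    (hF : ∀ x : 𝕀, HasDerivWithinAt F (G x) 𝕀 x) {c : ℝ} (hc : 0 ≤ c) :
    c < ‖G‖ ↔ ∃ a b : ℚ, 0 ≤ (a:ℝ) ∧ (b:ℝ) ≤ 1 ∧ (a:ℝ) < b ∧ c * (b - a) < |F b - F a| := by
  constructor
  · intro hlt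
    obtain ⟨x, hx⟩ : ∃ x : 𝕀, c < |G x| := by
      by_contra! h
      exact hlt.not_ge ((ContinuousMap.norm_le _ hc).2 h)
    have hlarge : IsOpen {y | c < |IccExtend zero_le_one G y|} :=
      isOpen_lt continuous_const G.continuous.Icc_extend'.abs
    have hU : ({y | c < |IccExtend zero_le_one G y|} ∩ Ioo 0 1).Nonempty := by
      have hx' : (x:ℝ) ∈ closure (Ioo (0:ℝ) 1) := by rw [closure_Ioo zero_ne_one]; exact x.2
      exact mem_closure_iff.1 hx' _ hlarge (by simpa [IccExtend_val] using hx)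
    obtain ⟨a, b, hab, hsub⟩ := exists_rat_Icc_subset_of_isOpen (hlarge.inter isOpen_Ioo) hU
    have ha : (0:ℝ) ≤ a := (hsub (left_mem_Icc.2 hab.le)).2.1.le
    have hb : (b:ℝ) ≤ 1 := (hsub (right_mem_Icc.2 hab.le)).2.2.le
    obtain ⟨ξ, hξ, hslope⟩ := exists_abs_sub_eq_mul_of_hasDerivWithinAt hF ha hb hab
    have hcξ : c < |G ξ| := by simpa [IccExtend_val] using (hsub (Ioo_subset_Icc_self hξ)).1
    exact ⟨a, b, ha, hb, hab, hslope ▸ mul_lt_mul_of_pos_right hcξ (sub_pos.2 hab)⟩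
  · rintro ⟨a, b, ha, hb, hab, hlt⟩
    obtain ⟨ξ, -, hslope⟩ := exists_abs_sub_eq_mul_of_hasDerivWithinAt hF ha hb hab
    rw [hslope] at hlt
    exact (lt_of_mul_lt_mul_right hlt (sub_pos.2 hab).le).trans_le (G.norm_coe_le_norm ξ)

noncomputable def polyReal (k : ℕ) (x : ℝ) : ℝ := ((polyEnum k).map (algebraMap ℚ ℝ)).eval x

noncomputable def polyPrimitive (k : ℕ) (x : ℝ) : ℝ := ∫ t in (0:ℝ)..x, polyReal k t

lemma hasDerivAt_polyPrimitive (k : ℕ) (x : ℝ) : HasDerivAt (polyPrimitive k) (polyReal k x) x :=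
  ((polyEnum k).map (algebraMap ℚ ℝ)).continuous.integral_hasStrictDerivAt 0 x |>.hasDerivAt

/-- If `P_k` is `2⁻ᵐ`-close to `f`, then `IsSlopeWitness k m n j a b` certifies
`2⁻⁽ⁿ⁺¹⁾ < ‖f' - P_j‖`: the slope of `f - ∫ P_j` over `[a, b]` is too large. -/
def IsSlopeWitness (k m n j : ℕ) (a b : ℚ) : Prop :=
  0 ≤ (a:ℝ) ∧ (b:ℝ) ≤ 1 ∧ (a:ℝ) < b ∧
    (1/2) ^ (n + 1) * (b - a) + 2 * (1/2) ^ m <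
      |(polyReal k b - polyPrimitive j b) - (polyReal k a - polyPrimitive j a)|

open Classical in
noncomputable def slopeQuery (p : Baire) (t : ℕ × ℕ × ℕ × ℚ × ℚ) : ℕ :=
  if IsSlopeWitness (p t.1) t.1 t.2.1 t.2.2.1 t.2.2.2.1 t.2.2.2.2 then Nat.pair t.2.1 t.2.2.1 + 1
  else 0

noncomputable def diffQuery (p : Baire) (e : ℕ) : ℕ :=
  slopeQuery p (Denumerable.ofNat (ℕ × ℕ × ℕ × ℚ × ℚ) e)

lemma continuous_diffQuery : Continuous diffQuery :=
  continuous_pi fun e => DependsOn.continuous (s := {(Denumerable.ofNat (ℕ × ℕ × ℕ × ℚ × ℚ) e).1})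
    (fun p q h => by rw [diffQuery, diffQuery, slopeQuery, slopeQuery, h _ rfl])
    (finite_singleton _)

lemma pair_mem_rangeM_diffQuery_iff (p : Baire) (n j : ℕ) :
    Nat.pair n j ∈ rangeM (diffQuery p) ↔ ∃ m a b, IsSlopeWitness (p m) m n j a b := by
  constructor
  · rintro ⟨e, he⟩
    rw [diffQuery, slopeQuery] at he
    split_ifs at he with hw
    obtain ⟨rfl, rfl⟩ := Nat.pair_eq_pair.1 (Nat.succ_injective he)
    exact ⟨_, _, _, hw⟩
  · rintro ⟨m, a, b, hw⟩
    refine ⟨@Encodable.encode _ Denumerable.toEncodable (m, n, j, a, b), ?_⟩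
    rw [diffQuery, Denumerable.ofNat_encode, slopeQuery, if_pos hw]

lemma abs_sub_le_abs_sub_add {u v x y δ : ℝ} (hu : |u - x| ≤ δ) (hv : |v - y| ≤ δ) :
    |u - v| ≤ |x - y| + 2 * δ :=
  calc |u - v| = |(x - y) + ((u - x) - (v - y))| := by ring_nf
    _ ≤ |x - y| + (|u - x| + |v - y|) := (abs_add_le _ _).trans (add_le_add_right (abs_sub _ _) _)
    _ ≤ |x - y| + 2 * δ := by linarith

lemma pair_mem_rangeM_diffQuery_iff_lt_norm {p : Baire} {f g : C(𝕀, ℝ)} (hf : deltaC p f)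
    (hfg : IsDerivOn f g) (n j : ℕ) :
    Nat.pair n j ∈ rangeM (diffQuery p) ↔ (1/2) ^ (n + 1) < ‖g - polyFun j‖ := by
  set F : ℝ → ℝ := fun x => IccExtend zero_le_one f x - polyPrimitive j x
  have hF : ∀ x : 𝕀, HasDerivWithinAt F ((g - polyFun j) x) 𝕀 x := fun x =>
    (hfg x).sub (hasDerivAt_polyPrimitive j x).hasDerivWithinAt
  have happrox : ∀ m (y : ℝ), y ∈ 𝕀 →
      |(polyReal (p m) y - polyPrimitive j y) - F y| ≤ (1/2) ^ m := fun m y hy => by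
    have := hf.abs_sub_le m ⟨y, hy⟩
    rw [abs_sub_comm] at this
    simpa [F, IccExtend_of_mem _ _ hy, polyReal, polyFun_apply] using this
  rw [pair_mem_rangeM_diffQuery_iff, lt_norm_iff_exists_rat_slope hF (by positivity)]
  have hslope : ∀ m (a b : ℚ), 0 ≤ (a:ℝ) → (b:ℝ) ≤ 1 → (a:ℝ) < b →
      |(polyReal (p m) b - polyPrimitive j b) - (polyReal (p m) a - polyPrimitive j a)| ≤
        |F b - F a| + 2 * (1/2) ^ m ∧
      |F b - F a| ≤
        |(polyReal (p m) b - polyPrimitive j b) - (polyReal (p m) a - polyPrimitive j a)| +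
          2 * (1/2) ^ m := fun m a b ha hb hab => by
    have hb' := happrox m b ⟨ha.trans hab.le, hb⟩
    have ha' := happrox m a ⟨ha, hab.le.trans hb⟩
    exact ⟨abs_sub_le_abs_sub_add hb' ha',
      abs_sub_le_abs_sub_add (by rwa [abs_sub_comm]) (by rwa [abs_sub_comm])⟩
  constructor
  · rintro ⟨m, a, b, ha, hb, hab, hw⟩
    exact ⟨a, b, ha, hb, hab, by linarith [(hslope m a b ha hb hab).1]⟩
  · rintro ⟨a, b, ha, hb, hab, hlt⟩
    obtain ⟨m, hm⟩ := exists_pow_lt_of_lt_one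
      (by linarith : 0 < (|F b - F a| - (1/2) ^ (n + 1) * (b - a)) / 4) (by norm_num : (1/2:ℝ) < 1)
    exact ⟨m, a, b, ha, hb, hab, by linarith [(hslope m a b ha hb hab).2]⟩

noncomputable def diffDecode (r : Baire) (n : ℕ) : ℕ := sInf {j | psnd r (Nat.pair n j) = 0}

lemma continuousOn_diffDecode :
    ContinuousOn diffDecode {r | ∀ n, ∃ j, psnd r (Nat.pair n j) = 0} :=
  continuousOn_pi.2 fun n => continuousOn_sInf_setOf_eq_zero.comp
    (continuous_pi fun j => continuous_apply (2 * Nat.pair n j + 1)).continuousOn fun _ hr => hr n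

lemma chi_eq_zero_iff {A : Set ℕ} {n : ℕ} : chi A n = 0 ↔ n ∉ A := by
  simp [chi]

theorem diffP_wred_EC : WRed diffP EC := by
  refine ⟨univ, {r | ∀ n, ∃ j, psnd r (Nat.pair n j) = 0}, diffQuery, diffDecode,
    continuous_diffQuery.continuousOn, continuousOn_diffDecode, ?_⟩
  rintro p ⟨f, g, hf, hfg⟩
  refine ⟨trivial, trivial, fun q (hq : q = _) => ?_⟩
  have hzero : ∀ n j, psnd (pairB p q) (Nat.pair n j) = 0 ↔ ‖g - polyFun j‖ ≤ (1/2) ^ (n + 1) := by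
    intro n j
    rw [psnd_pairB, hq, chi_eq_zero_iff, pair_mem_rangeM_diffQuery_iff_lt_norm hf hfg, not_lt]
  have hdom : ∀ n, ∃ j, psnd (pairB p q) (Nat.pair n j) = 0 := fun n => by
    obtain ⟨j, hj⟩ := exists_polyFun_norm_sub_le g (n + 1)
    exact ⟨j, (hzero n j).2 hj⟩
  refine ⟨hdom, f, g, hf, hfg, deltaC_iff.2 fun n => ?_⟩
  calc ‖g - polyFun (diffDecode (pairB p q) n)‖ ≤ (1/2) ^ (n + 1) :=
        (hzero n _).1 (Nat.sInf_mem (hdom n))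
    _ ≤ (1/2) ^ n := pow_le_pow_of_le_one (by norm_num) (by norm_num) n.le_succ

/-- von Stein's theorem: `EC ≡_W d`, where `d` is differentiation on `C[0,1]`
restricted to continuously differentiable functions. -/
theorem EC_equiv_diff : WEquiv EC diffP :=
  ⟨EC_wred_diffP, diffP_wred_EC⟩
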